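/- Fix a complex number q₀ of modulus 1 and let r₁, r₂, r₃ be the three rows of R₁(q₀). If s is a row vector of length 6 with unimodular entries that is orthogonal to each of r₁, r₂, r₃, then the pair {r_j, s} is cancelling for every j ∈ {1,2,3}. -/

import Mathlib

/-!
Write `t = conj s`, `u = t₁ - i t₃` and `v = t₁ + i t₃`. The first two rows of `R₁(q₀)` give
`2 (t₀ + t₂) = -(1 + i) u` and `2 (t₄ + t₅) = -(1 - i) v`, and the third row then reads
`(1 + i)(t₀ - t₂) + 2 q₀ (t₄ - t₅) = 3 u`. For unimodular `x, y` the numbers `x + y` and `x - y`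
are orthogonal with `|x + y|² + |x - y|² = 4`; this fixes `|t₀ - t₂|²` and `|t₄ - t₅|²` in terms
of `a = |u|²` and puts `u · conj (t₀ - t₂)` on a fixed real line. Taking squared moduli in the
third relation determines `u · conj (t₀ - t₂)` outright, and comparing its modulus with
`|u| |t₀ - t₂|` gives `a (a - 4) = 0`. Hence `u = 0`, so `t₀ + t₂ = 0`, or `v = 0`, so
`t₄ + t₅ = 0` and moreover `t₀ = i t₂`. In both cases every row of `R₁(q₀)` has two terms of its
inner product with `s` that cancel.
-/

open Matrix Complex

noncomputable section

/-- A complex Hadamard matrix: all entries unimodular, rows pairwise orthogonal. -/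
def IsCHM {n : ℕ} (H : Matrix (Fin n) (Fin n) ℂ) : Prop :=
  (∀ i j, ‖H i j‖ = 1) ∧
  (∀ i j, i ≠ j → ∑ k, H i k * star (H j k) = 0)

/-- A matrix is normalized if its first row and first column consist of ones. -/
def Normalized {n : ℕ} [NeZero n] (H : Matrix (Fin n) (Fin n) ℂ) : Prop :=
  (∀ j, H 0 j = 1) ∧ (∀ i, H i 0 = 1)

/-- Hadamard equivalence: permutations of rows and columns together with
multiplication of rows and columns by unimodular constants. -/
def HadEquiv {m n : ℕ} (H K : Matrix (Fin m) (Fin n) ℂ) : Prop :=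
  ∃ (σ : Equiv.Perm (Fin m)) (τ : Equiv.Perm (Fin n)) (d : Fin m → ℂ) (e : Fin n → ℂ),
    (∀ i, ‖d i‖ = 1) ∧ (∀ j, ‖e j‖ = 1) ∧
    (∀ i j, K i j = d i * e j * H (σ i) (τ j))

/-- The transposed Fourier matrix `F₆ᵀ(a,b)` built from `a`, `b` and
a primitive cube root of unity `w`. -/
def F6T (a b w : ℂ) : Matrix (Fin 6) (Fin 6) ℂ :=
  !![1, 1,   1,   1,  1,        1;
     1, 1,   1,  -1, -1,       -1;
     1, w,   w^2, a,  a*w,      a*w^2;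
     1, w,   w^2,-a, -(a*w),   -(a*w^2);
     1, w^2, w,   b,  b*w^2,    b*w;
     1, w^2, w,  -b, -(b*w^2), -(b*w)]

/-- Membership (up to equivalence) in the transposed Fourier family. -/
def MemF6T (H : Matrix (Fin 6) (Fin 6) ℂ) : Prop :=
  ∃ a b w : ℂ, ‖a‖ = 1 ∧ ‖b‖ = 1 ∧ 1 + w + w^2 = 0 ∧
    HadEquiv H (F6T a b w)

/-- The 2-circulant matrix `X₆(β,γ,ε,φ)`. -/
def X6 (β γ ε φ : ℂ) : Matrix (Fin 6) (Fin 6) ℂ :=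
  !![1,  1,       1,          1,          1,        1;
     1, -1,      -(γ*ε)⁻¹,   -(β*φ)⁻¹,    (γ*ε)⁻¹,  (β*φ)⁻¹;
     1, -(ε/β),  -1,         -(ε/(γ*φ)),  ε/(γ*φ),  ε/β;
     1, -(φ/γ),  -(φ/(β*ε)), -1,          φ/γ,      φ/(β*ε);
     1,  ε/β,     φ/(β*ε),    (β*φ)⁻¹,    (β*γ)⁻¹,  γ/β^2;
     1,  φ/γ,     (γ*ε)⁻¹,    ε/(γ*φ),    β/γ^2,    (β*γ)⁻¹]

/-- Membership (up to equivalence) in the 2-circulant family, with the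
implicit unimodularity constraints and the defining polynomial equation. -/
def MemX6 (H : Matrix (Fin 6) (Fin 6) ℂ) : Prop :=
  ∃ β γ ε φ : ℂ, ‖β‖ = 1 ∧ ‖γ‖ = 1 ∧ ‖ε‖ = 1 ∧
    ‖φ‖ = 1 ∧
    β*γ*ε^2 + β*γ*φ + β^2*ε*φ + γ*ε*φ + β*γ^2*ε*φ + β*γ*ε*φ^2 = 0 ∧
    HadEquiv H (X6 β γ ε φ)

/-- The Diţă matrix `D₆(c)`. -/
def D6 (c : ℂ) : Matrix (Fin 6) (Fin 6) ℂ :=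
  !![1,  1,      1,  1,      1,      1;
     1, -1,      I, -I,     -(I*c),  I*c;
     1,  I,     -1,  I,     -I,     -I;
     1, -I,      I, -1,      I*c,   -(I*c);
     1, -(I/c), -I,  I/c,   -1,      I;
     1,  I/c,   -I, -(I/c),  I,     -1]

/-- Membership (up to equivalence) in the Diţă family. -/
def MemD6 (H : Matrix (Fin 6) (Fin 6) ℂ) : Prop :=
  ∃ c : ℂ, ‖c‖ = 1 ∧ HadEquiv H (D6 c)

/-- Two rows are cancelling if two of the terms of their inner product cancel. -/
def Cancelling {n : ℕ} (r s : Fin n → ℂ) : Prop :=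
  ∃ p q : Fin n, p ≠ q ∧ r p / s p + r q / s q = 0

/-- The first family of 3×6 matrices with pairwise cancelling rows. -/
def R1 (q : ℂ) : Matrix (Fin 3) (Fin 6) ℂ :=
  !![1,  1,  1,  1,  1,  1;
     1,  I,  1, -I, -1, -1;
     1, -1, -I,  I,  q, -q]

/-- The second family of 3×6 matrices with pairwise cancelling rows. -/
def R2 (q : ℂ) : Matrix (Fin 3) (Fin 6) ℂ :=
  !![1,  1,  1,    1,      1,  1;
     1,  I, -1,   -I,      q, -q;
     1, -1, -q,    I*q, -(I*q), q]

/-- The inner-product-like sum `I((x,y))` over four selected columns. -/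
def HI {m n : ℕ} (M : Matrix (Fin m) (Fin n) ℂ) (x y : Fin m) (c : Fin 4 → Fin n) : ℂ :=
  ∑ v, M x (c v) / M y (c v)

/-- The Haagerup condition for the 3×4 submatrix of `M` given by rows `i,j,k`
and the four columns selected by `c`. -/
def HaagerupCond {m n : ℕ} (M : Matrix (Fin m) (Fin n) ℂ)
    (i j k : Fin m) (c : Fin 4 → Fin n) : Prop :=
  HI M i j c * HI M j k c * HI M k i c - 4 +
    HI M i j c * HI M j i c + HI M j k c * HI M k j c + HI M k i c * HI M i k c = 0

/-- The matrix `H(a)` of Proposition 6.3. -/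
def Ha (a w : ℂ) : Matrix (Fin 6) (Fin 6) ℂ :=
  !![1,  1, 1,     1,      1,      1;
     1, -1, 1,    -1,      a,     -a;
     1,  1, w,     w,      w^2,    w^2;
     1, -1, w,    -w,      a*w^2, -(a*w^2);
     1,  1, w^2,   w^2,    w,      w;
     1, -1, w^2, -(w^2),   a*w,   -(a*w)]

open ComplexConjugate

lemma mul_conj_eq_one_of_norm_eq_one {z : ℂ} (hz : ‖z‖ = 1) : z * conj z = 1 := by
  rw [mul_conj', hz]; norm_num

lemma cancelling_of_mul_conj {n : ℕ} {r s : Fin n → ℂ} (hs : ∀ k, ‖s k‖ = 1) {p q : Fin n}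
    (hpq : p ≠ q) (h : r p * conj (s p) + r q * conj (s q) = 0) : Cancelling r s :=
  ⟨p, q, hpq, by rwa [div_eq_mul_inv, div_eq_mul_inv, inv_eq_conj (hs p), inv_eq_conj (hs q)]⟩

/- `ring` treats `I` as an atom, so the `linear_combination`s below carry multiples of `I_sq`. -/

lemma eq_zero_or_mul_conj_eq_four {u D E q : ℂ} (hq : q * conj q = 1)
    (hperp : (1 + I) * u * conj D + (1 - I) * conj u * D = 0)
    (hD : D * conj D = 4 - u * conj u / 2) (hE : E * conj E = 2 + u * conj u / 2)
    (h : (1 + I) * D + 2 * q * E = 3 * u) :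
    u = 0 ∨ (u * conj u = 4 ∧ 2 * D = (1 - I) * u) := by
  have hconj : (1 - I) * conj D + 2 * conj q * conj E = 3 * conj u := by
    simpa [conj_I, sub_eq_add_neg, map_ofNat] using congrArg conj h
  have hsum : (1 - I) * u * conj D + (1 + I) * conj u * D = 2 * (u * conj u) := by
    linear_combination (1 / 3) * (2 * conj q * conj E * h + (3 * u - (1 + I) * D) * hconj
      - 4 * (E * conj E) * hq - 4 * hE + 2 * hD - D * conj D * I_sq)
  have hprod : u * conj D = (1 + I) * (u * conj u) / 2 := by
    linear_combination (-I / 4) * ((1 + I) * hperp - (1 - I) * hsum)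
      + (u * conj D - u * conj u / 2) * I_sq
  have hprod' : conj u * D = (1 - I) * (u * conj u) / 2 := by
    linear_combination (1 / 4) * ((1 + I) * hperp + (1 - I) * hsum)
      + (conj u * D - u * conj D) / 2 * I_sq
  have ha : u * conj u * (u * conj u - 4) = 0 := by
    linear_combination u * conj u * hD - conj u * D * hprod
      - (1 + I) * (u * conj u) / 2 * hprod' + (u * conj u) ^ 2 / 4 * I_sq
  rcases mul_eq_zero.mp ha with h0 | h4
  · left
    rwa [mul_conj, ofReal_eq_zero, normSq_eq_zero] at h0
  · right
    refine ⟨by linear_combination h4, ?_⟩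
    linear_combination (I - 1) / 2 * (D * hprod - u * hD) - (D / 2 + (1 - I) * u / 4) * h4
      + D * (u * conj u) / 4 * I_sq

theorem R1_dichotomy {q : ℂ} (hq : ‖q‖ = 1) {t : Fin 6 → ℂ} (ht : ∀ k, ‖t k‖ = 1)
    (h : ∀ j, ∑ k, R1 q j k * t k = 0) :
    (t 1 = I * t 3 ∧ t 0 + t 2 = 0) ∨ (t 4 + t 5 = 0 ∧ t 0 = I * t 2) := by
  have hn k : t k * conj (t k) = 1 := mul_conj_eq_one_of_norm_eq_one (ht k)
  have e0 : t 0 + t 1 + t 2 + t 3 + t 4 + t 5 = 0 := by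
    simpa [R1, Fin.sum_univ_six] using h 0
  have e1 : t 0 + I * t 1 + t 2 - I * t 3 - t 4 - t 5 = 0 := by
    simpa [R1, Fin.sum_univ_six, sub_eq_add_neg] using h 1
  have e2 : t 0 - t 1 - I * t 2 + I * t 3 + q * t 4 - q * t 5 = 0 := by
    simpa [R1, Fin.sum_univ_six, sub_eq_add_neg] using h 2
  have hA : 2 * (t 0 + t 2) = -(1 + I) * (t 1 - I * t 3) := by
    linear_combination e0 + e1 - t 3 * I_sq
  have hB : 2 * (t 4 + t 5) = -(1 - I) * (t 1 + I * t 3) := by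
    linear_combination e0 - e1 - t 3 * I_sq
  have hA' : 2 * (conj (t 0) + conj (t 2)) = -(1 - I) * (conj (t 1) + I * conj (t 3)) := by
    simpa [conj_I, map_ofNat, sub_eq_add_neg] using congrArg conj hA
  have hB' : 2 * (conj (t 4) + conj (t 5)) = -(1 + I) * (conj (t 1) - I * conj (t 3)) := by
    simpa [conj_I, map_ofNat, sub_eq_add_neg] using congrArg conj hB
  have huv : (t 1 - I * t 3) * conj (t 1 - I * t 3) + (t 1 + I * t 3) * conj (t 1 + I * t 3)
      = 4 := by
    simp only [map_mul, map_add, map_sub, conj_I]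
    linear_combination 2 * hn 1 + 2 * hn 3 - 2 * t 3 * conj (t 3) * I_sq
  have hperp : (1 + I) * (t 1 - I * t 3) * conj (t 0 - t 2)
      + (1 - I) * conj (t 1 - I * t 3) * (t 0 - t 2) = 0 := by
    simp only [map_mul, map_sub, conj_I]
    linear_combination (conj (t 0) - conj (t 2)) * hA + (t 0 - t 2) * hA' - 4 * hn 0 + 4 * hn 2
  have hD : (t 0 - t 2) * conj (t 0 - t 2) = 4 - (t 1 - I * t 3) * conj (t 1 - I * t 3) / 2 := by
    simp only [map_mul, map_sub, conj_I]
    linear_combination 2 * hn 0 + 2 * hn 2 - (1 / 4) * (2 * (conj (t 0) + conj (t 2)) * hA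
      - (1 + I) * (t 1 - I * t 3) * hA' - (t 1 - I * t 3) * (conj (t 1) + I * conj (t 3)) * I_sq)
  have hE : (t 4 - t 5) * conj (t 4 - t 5) = 2 + (t 1 - I * t 3) * conj (t 1 - I * t 3) / 2 := by
    simp only [map_mul, map_add, map_sub, conj_I] at huv ⊢
    linear_combination 2 * hn 4 + 2 * hn 5 - (1 / 2) * huv
      - (1 / 4) * (2 * (conj (t 4) + conj (t 5)) * hB - (1 - I) * (t 1 + I * t 3) * hB'
        - (t 1 + I * t 3) * (conj (t 1) - I * conj (t 3)) * I_sq)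
  have hrow : (1 + I) * (t 0 - t 2) + 2 * q * (t 4 - t 5) = 3 * (t 1 - I * t 3) := by
    linear_combination 2 * e2 - (1 - I) / 2 * hA + (I * t 3 - t 1) / 2 * I_sq
  obtain hu | ⟨hu4, hDu⟩ :=
    eq_zero_or_mul_conj_eq_four (mul_conj_eq_one_of_norm_eq_one hq) hperp hD hE hrow
  · left
    exact ⟨by linear_combination hu, by linear_combination hA / 2 - (1 + I) / 2 * hu⟩
  · right
    have hv : t 1 + I * t 3 = 0 := by
      have hvv : (t 1 + I * t 3) * conj (t 1 + I * t 3) = 0 := by linear_combination huv - hu4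
      rwa [mul_conj, ofReal_eq_zero, normSq_eq_zero] at hvv
    exact ⟨by linear_combination hB / 2 - (1 - I) / 2 * hv,
      by linear_combination (1 / 4) * (hA + hDu) - (I / 4) * (hA - hDu)⟩

/-- Any unimodular row orthogonal to all three rows of `R₁(q₀)`
is cancelling with each row of `R₁(q₀)`. -/
theorem stmt_7 (q₀ : ℂ) (hq : ‖q₀‖ = 1)
    (s : Fin 6 → ℂ) (hs : ∀ k, ‖s k‖ = 1)
    (horth : ∀ j : Fin 3, ∑ k, R1 q₀ j k * star (s k) = 0) :
    ∀ j : Fin 3, Cancelling (R1 q₀ j) s := by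
  intro j
  have hs' : ∀ k, ‖conj (s k)‖ = 1 := by simpa using hs
  rcases R1_dichotomy hq hs' horth with ⟨h13, h02⟩ | ⟨h45, h02⟩ <;> fin_cases j
  · exact cancelling_of_mul_conj hs (p := 0) (q := 2) (by decide) (by simp [R1, h02])
  · exact cancelling_of_mul_conj hs (p := 0) (q := 2) (by decide) (by simp [R1, h02])
  · exact cancelling_of_mul_conj hs (p := 1) (q := 3) (by decide) (by simp [R1, h13])
  · exact cancelling_of_mul_conj hs (p := 4) (q := 5) (by decide) (by simp [R1, h45])
  · exact cancelling_of_mul_conj hs (p := 4) (q := 5) (by decide) (by simp [R1, ← neg_add, h45])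
  · exact cancelling_of_mul_conj hs (p := 0) (q := 2) (by decide) (by simp [R1, h02])
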